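/- For every n ≥ 1, the level-n Schreier graph Γ_n of the Grigorchuk group is connected and its diameter equals 2^n − 1. -/

import Mathlib

noncomputable section

/-- The generator `a` of the Grigorchuk group acting on finite binary words:
`a(xw) = (1−x)w`. -/
def grigA : List Bool → List Bool
  | [] => []
  | x :: w => (!x) :: w

mutual
  /-- The generator `b`: `b(0w) = 0·a(w)`, `b(1w) = 1·c(w)`. -/
  def grigB : List Bool → List Bool
    | [] => []
    | false :: w => false :: grigA w
    | true :: w => true :: grigC w
  /-- The generator `c`: `c(0w) = 0·a(w)`, `c(1w) = 1·d(w)`. -/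
  def grigC : List Bool → List Bool
    | [] => []
    | false :: w => false :: grigA w
    | true :: w => true :: grigD w
  /-- The generator `d`: `d(0w) = 0·w`, `d(1w) = 1·b(w)`. -/
  def grigD : List Bool → List Bool
    | [] => []
    | false :: w => false :: w
    | true :: w => true :: grigB w
end

/-- The level-`n` Schreier graph `Γ_n` of the Grigorchuk group: vertices are binary words of
length `n`, and distinct `x, y` are adjacent iff `y ∈ {a(x), b(x), c(x), d(x)}`
(the relation is symmetrized; since `a, b, c, d` are involutions it is the same relation). -/
def grigGraph (n : ℕ) : SimpleGraph (List.Vector Bool n) where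
  Adj x y := x ≠ y ∧ ∃ s ∈ [grigA, grigB, grigC, grigD],
    s x.toList = y.toList ∨ s y.toList = x.toList
  symm := by
    constructor
    rintro x y ⟨h1, s, hs, h2⟩
    exact ⟨h1.symm, s, hs, h2.symm⟩
  loopless := ⟨fun x h => h.1 rfl⟩


/-!
Γ_n is a path with some doubled edges and loops. Read a word as a reflected binary number with
its first letter least significant; this gives a bijection `pathIndex` onto `{0, …, 2^n - 1}`.
The generator `a` swaps the positions `2k` and `2k + 1`, and each of `b, c, d` either fixes a
word or moves it between positions `2k + 1` and `2k + 2`, at least one of them doing so. Hence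
the graph distance is the difference of positions.
-/

open Function

namespace SimpleGraph

variable {V : Type*} {G : SimpleGraph V} {f : V → ℕ}

theorem Walk.apply_le_apply_add_length (hf : ∀ x y, G.Adj x y → f y ≤ f x + 1) {x y : V}
    (p : G.Walk x y) : f y ≤ f x + p.length := by
  induction p with
  | nil => simp
  | cons hadj _ ih =>
    have := hf _ _ hadj
    rw [Walk.length_cons]
    omega

theorem exists_walk_length_eq_sub (hinj : Injective f)
    (hstep : ∀ x y, f x < f y → ∃ z, G.Adj x z ∧ f z = f x + 1) {x y : V}
    (hxy : f x ≤ f y) :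
    ∃ p : G.Walk x y, p.length = f y - f x := by
  induction hk : f y - f x generalizing x with
  | zero =>
    obtain rfl : x = y := hinj (by omega)
    exact ⟨.nil, rfl⟩
  | succ k ih =>
    obtain ⟨z, hxz, hz⟩ := hstep x y (by omega)
    obtain ⟨p, hp⟩ := ih (x := z) (by omega) (by omega)
    exact ⟨.cons hxz p, by rw [Walk.length_cons, hp]⟩

theorem preconnected_of_exists_adj_apply_eq_succ (hinj : Injective f)
    (hstep : ∀ x y, f x < f y → ∃ z, G.Adj x z ∧ f z = f x + 1) : G.Preconnected := by
  intro x y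
  rcases le_total (f x) (f y) with hxy | hyx
  · exact ⟨(exists_walk_length_eq_sub hinj hstep hxy).choose⟩
  · exact ⟨(exists_walk_length_eq_sub hinj hstep hyx).choose.reverse⟩

theorem dist_eq_sub_of_le (hf : ∀ x y, G.Adj x y → f y ≤ f x + 1) (hinj : Injective f)
    (hstep : ∀ x y, f x < f y → ∃ z, G.Adj x z ∧ f z = f x + 1) {x y : V}
    (hxy : f x ≤ f y) :
    G.dist x y = f y - f x := by
  obtain ⟨p, hp⟩ := exists_walk_length_eq_sub hinj hstep hxy
  obtain ⟨q, hq⟩ := p.reachable.exists_walk_length_eq_dist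
  have := q.apply_le_apply_add_length hf
  have := dist_le p
  omega

theorem sup_dist_eq_of_dist_eq_sub [Fintype V] {N : ℕ} (hlt : ∀ x, f x < N)
    (hsurj : ∀ i < N, ∃ x, f x = i) (hdist : ∀ x y, f x ≤ f y → G.dist x y = f y - f x) :
    Finset.univ.sup (fun pq : V × V => G.dist pq.1 pq.2) = N - 1 := by
  refine le_antisymm (Finset.sup_le fun ⟨x, y⟩ _ => ?_) ?_
  · have := hlt x
    have := hlt y
    rcases le_total (f x) (f y) with hxy | hyx
    · rw [hdist x y hxy]
      omega
    · rw [dist_comm, hdist y x hyx]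
      omega
  · rcases N.eq_zero_or_pos with rfl | hN
    · exact Nat.zero_le _
    obtain ⟨x₀, hx₀⟩ := hsurj 0 hN
    obtain ⟨x₁, hx₁⟩ := hsurj (N - 1) (by omega)
    calc N - 1 = G.dist x₀ x₁ := by rw [hdist x₀ x₁ (by omega)]; omega
      _ ≤ _ :=
        Finset.le_sup (f := fun pq : V × V => G.dist pq.1 pq.2) (Finset.mem_univ (x₀, x₁))

end SimpleGraph

def pathIndex : List Bool → ℕ
  | [] => 0
  | true :: w => 2 * pathIndex w + pathIndex w % 2
  | false :: w => 2 * pathIndex w + (pathIndex w + 1) % 2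

theorem pathIndex_lt_two_pow (w : List Bool) : pathIndex w < 2 ^ w.length := by
  induction w with
  | nil => simp [pathIndex]
  | cons x w ih => cases x <;> simp only [pathIndex, List.length_cons, pow_succ] <;> omega

theorem pathIndex_toList_lt {n : ℕ} (v : List.Vector Bool n) : pathIndex v.toList < 2 ^ n := by
  simpa using pathIndex_lt_two_pow v.toList

theorem eq_of_pathIndex_eq : ∀ {w v : List Bool}, w.length = v.length →
    pathIndex w = pathIndex v → w = v
  | [], [], _, _ => rfl
  | x :: w, y :: v, hl, he => by
    have hwv : pathIndex w = pathIndex v := by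
      cases x <;> cases y <;> simp only [pathIndex] at he <;> omega
    obtain rfl := eq_of_pathIndex_eq (by simpa using hl) hwv
    cases x <;> cases y <;> simp only [pathIndex] at he <;> first | rfl | omega

theorem pathIndex_injective (n : ℕ) :
    Injective fun v : List.Vector Bool n => pathIndex v.toList := fun v w h =>
  List.Vector.toList_injective (eq_of_pathIndex_eq (by simp) h)

theorem exists_pathIndex_eq {n i : ℕ} (hi : i < 2 ^ n) :
    ∃ v : List.Vector Bool n, pathIndex v.toList = i := by
  let g (v : List.Vector Bool n) : Fin (2 ^ n) :=
    ⟨pathIndex v.toList, pathIndex_toList_lt v⟩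
  have hg : Bijective g := (Fintype.bijective_iff_injective_and_card g).2
    ⟨fun v w h => pathIndex_injective n (congrArg Fin.val h), by simp [card_vector]⟩
  obtain ⟨v, hv⟩ := hg.2 ⟨i, hi⟩
  exact ⟨v, congrArg Fin.val hv⟩

theorem grigA_length (w : List Bool) : (grigA w).length = w.length := by
  cases w <;> rfl

theorem pathIndex_grigA_cons (x : Bool) (w : List Bool) :
    pathIndex (x :: w) % 2 = 0 ∧ pathIndex (grigA (x :: w)) = pathIndex (x :: w) + 1 ∨
      pathIndex (x :: w) % 2 = 1 ∧ pathIndex (grigA (x :: w)) + 1 = pathIndex (x :: w) := by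
  cases x <;> simp only [grigA, pathIndex, Bool.not_true, Bool.not_false] <;> omega

/-- Writing `w = 1^k 0 u`, the one of `b, c, d` that acts at depth `k` as `d` fixes `w`, and the
other two send it to `1^k 0 a(u)`; the word `1^n` is fixed by all three. -/
def bcdPartner : List Bool → List Bool
  | [] => []
  | false :: w => false :: grigA w
  | true :: w => true :: bcdPartner w

theorem bcdPartner_length (w : List Bool) : (bcdPartner w).length = w.length := by
  induction w with
  | nil => rfl
  | cons x w ih => cases x <;> simp [bcdPartner, grigA_length, ih]

/-- The truncations `0 - 1 = 0` and `min … (2 ^ w.length - 1)` say that `bcdPartner` fixes both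
endpoints of the path. -/
theorem pathIndex_bcdPartner (w : List Bool) :
    pathIndex (bcdPartner w) = if pathIndex w % 2 = 1
      then min (pathIndex w + 1) (2 ^ w.length - 1) else pathIndex w - 1 := by
  induction w with
  | nil => rfl
  | cons x w ih =>
    have hlt := pathIndex_lt_two_pow w
    cases x with
    | true =>
      simp only [bcdPartner, pathIndex, ih, List.length_cons, pow_succ]
      split_ifs <;> omega
    | false =>
      cases w with
      | nil => rfl
      | cons y u =>
        have hA := pathIndex_grigA_cons y u
        simp only [bcdPartner, List.length_cons, pow_succ] at hlt ⊢
        rw [pathIndex.eq_3, pathIndex.eq_3]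
        generalize pathIndex (grigA (y :: u)) = j at hA ⊢
        generalize pathIndex (y :: u) = i at hA hlt ⊢
        split_ifs <;> omega

theorem grigBCD_eq_self_or_bcdPartner (w : List Bool) :
    (grigB w = w ∨ grigB w = bcdPartner w) ∧ (grigC w = w ∨ grigC w = bcdPartner w) ∧
      (grigD w = w ∨ grigD w = bcdPartner w) := by
  induction w with
  | nil => simp [grigB, grigC, grigD]
  | cons x w ih =>
    obtain ⟨hB, hC, hD⟩ := ih
    cases x <;> simp [grigB, grigC, grigD, bcdPartner, hB, hC, hD]

theorem exists_grigBCD_eq_bcdPartner (w : List Bool) :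
    ∃ s ∈ [grigB, grigC, grigD], s w = bcdPartner w := by
  induction w with
  | nil => exact ⟨grigB, by simp, rfl⟩
  | cons x w ih =>
    cases x with
    | false => exact ⟨grigB, by simp, rfl⟩
    | true =>
      obtain ⟨s, hs, hsw⟩ := ih
      simp only [List.mem_cons, List.not_mem_nil, or_false] at hs
      rcases hs with rfl | rfl | rfl
      · exact ⟨grigD, by simp, by simp [grigD, bcdPartner, hsw]⟩
      · exact ⟨grigB, by simp, by simp [grigB, bcdPartner, hsw]⟩
      · exact ⟨grigC, by simp, by simp [grigC, bcdPartner, hsw]⟩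

theorem grig_eq_grigA_or_self_or_bcdPartner {s : List Bool → List Bool}
    (hs : s ∈ [grigA, grigB, grigC, grigD]) (w : List Bool) :
    s w = grigA w ∨ s w = w ∨ s w = bcdPartner w := by
  simp only [List.mem_cons, List.not_mem_nil, or_false] at hs
  have := grigBCD_eq_self_or_bcdPartner w
  rcases hs with rfl | rfl | rfl | rfl <;> tauto

theorem grig_length {s : List Bool → List Bool} (hs : s ∈ [grigA, grigB, grigC, grigD])
    (w : List Bool) : (s w).length = w.length := by
  rcases grig_eq_grigA_or_self_or_bcdPartner hs w with h | h | h <;>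
    rw [h] <;> simp only [grigA_length, bcdPartner_length]

theorem pathIndex_grig_le_and_le {s : List Bool → List Bool}
    (hs : s ∈ [grigA, grigB, grigC, grigD]) (w : List Bool) :
    pathIndex (s w) ≤ pathIndex w + 1 ∧ pathIndex w ≤ pathIndex (s w) + 1 := by
  rcases grig_eq_grigA_or_self_or_bcdPartner hs w with h | h | h <;> rw [h]
  · cases w with
    | nil => simp [grigA]
    | cons x w => have := pathIndex_grigA_cons x w; omega
  · omega
  · have := pathIndex_lt_two_pow w
    rw [pathIndex_bcdPartner]
    split_ifs <;> omega

theorem exists_grig_pathIndex_eq_succ {w : List Bool} (hw : w ≠ [])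
    (hlt : pathIndex w + 1 < 2 ^ w.length) :
    ∃ s ∈ [grigA, grigB, grigC, grigD], pathIndex (s w) = pathIndex w + 1 := by
  rcases Nat.mod_two_eq_zero_or_one (pathIndex w) with heven | hodd
  · obtain ⟨x, w, rfl⟩ := List.exists_cons_of_ne_nil hw
    exact ⟨grigA, by simp, by have := pathIndex_grigA_cons x w; omega⟩
  · obtain ⟨s, hs, hsw⟩ := exists_grigBCD_eq_bcdPartner w
    refine ⟨s, List.mem_cons_of_mem _ hs, ?_⟩
    rw [hsw, pathIndex_bcdPartner, if_pos hodd]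
    omega

namespace grigGraph

variable {n : ℕ}

theorem pathIndex_le_of_adj {x y : List.Vector Bool n} (h : (grigGraph n).Adj x y) :
    pathIndex y.toList ≤ pathIndex x.toList + 1 := by
  obtain ⟨-, s, hs, hxy | hyx⟩ := h
  · exact hxy ▸ (pathIndex_grig_le_and_le hs x.toList).1
  · exact hyx ▸ (pathIndex_grig_le_and_le hs y.toList).2

theorem exists_adj_pathIndex_eq_succ {x y : List.Vector Bool n}
    (hxy : pathIndex x.toList < pathIndex y.toList) :
    ∃ z, (grigGraph n).Adj x z ∧ pathIndex z.toList = pathIndex x.toList + 1 := by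
  have hy := pathIndex_toList_lt y
  have hn : n ≠ 0 := by
    rintro rfl
    rw [pow_zero] at hy
    omega
  have hx : x.toList ≠ [] := by
    rw [← List.length_pos_iff, x.toList_length]
    omega
  obtain ⟨s, hs, hsx⟩ := exists_grig_pathIndex_eq_succ hx (by rw [x.toList_length]; omega)
  refine ⟨⟨s x.toList, (grig_length hs _).trans x.toList_length⟩, ⟨?_, s, hs, .inl rfl⟩,
    hsx⟩
  intro hxs
  have := congrArg (fun v : List.Vector Bool n => pathIndex v.toList) hxs
  simp only [List.Vector.toList_mk] at this
  omega

theorem dist_eq_sub {x y : List.Vector Bool n}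
    (hxy : pathIndex x.toList ≤ pathIndex y.toList) :
    (grigGraph n).dist x y = pathIndex y.toList - pathIndex x.toList :=
  SimpleGraph.dist_eq_sub_of_le (fun _ _ => pathIndex_le_of_adj) (pathIndex_injective n)
    (fun _ _ => exists_adj_pathIndex_eq_succ) hxy

end grigGraph

/-- for every `n ≥ 1` the level-`n` Schreier graph `Γ_n` of the Grigorchuk group
is connected and has diameter `2^n − 1`. -/
theorem statement_5 (n : ℕ) (hn : 1 ≤ n) :
    (grigGraph n).Connected ∧
      Finset.univ.sup
          (fun pq : List.Vector Bool n × List.Vector Bool n =>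
            (grigGraph n).dist pq.1 pq.2) = 2 ^ n - 1 := by
  have hpre : (grigGraph n).Preconnected :=
    SimpleGraph.preconnected_of_exists_adj_apply_eq_succ (pathIndex_injective n)
      fun _ _ => grigGraph.exists_adj_pathIndex_eq_succ
  exact ⟨(SimpleGraph.connected_iff _).2 ⟨hpre, inferInstance⟩,
    SimpleGraph.sup_dist_eq_of_dist_eq_sub pathIndex_toList_lt (fun _ => exists_pathIndex_eq)
      fun _ _ => grigGraph.dist_eq_sub⟩
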